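/- Suppose that for every u < v and every ε > 0, P[(1/t) S_t(u,v) ≥ (v-u)(f(u)+ε)] → 0 and P[(1/t) S_t(u,v) ≤ (v-u)(f(v)-ε)] → 0 as t → ∞, where S_t(u,v) is a family of random variables satisfying S_t(u,v) = ∑_{i=0}^{k-1} S_t(u + i(v-u)/k, u + (i+1)(v-u)/k) for every k ≥ 1, and f : ℝ → [0,1] is monotone nonincreasing and Riemann integrable on [u,v]. Then (1/t) S_t(u,v) → ∫_u^v f(s) ds in probability. -/

import Mathlib

/-!
Cut `[u, v]` into `k` equal pieces. Off the finitely many events controlled by the one-sided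
estimates (with slack `δ`), every piece contributes strictly between its right and left Riemann
terms of the antitone `f`, so by additivity `S t u v / t` lies within `(v - u) δ` of the
interval between the right and left Riemann sums. That interval contains `∫_u^v f` and has
length `(v - u) (f u - f v) / k`, small for large `k`.
-/

open MeasureTheory Filter Finset Topology

namespace Antitone

variable {f : ℝ → ℝ}

theorem integral_le_sub_mul_left (hf : Antitone f) {a b : ℝ} (hab : a ≤ b) :
    ∫ s in a..b, f s ≤ (b - a) * f a := by
  calc ∫ s in a..b, f s ≤ ∫ _ in a..b, f a :=
        intervalIntegral.integral_mono_on hab hf.intervalIntegrable intervalIntegrable_const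
          fun _ hs => hf hs.1
    _ = (b - a) * f a := by rw [intervalIntegral.integral_const, smul_eq_mul]

theorem sub_mul_right_le_integral (hf : Antitone f) {a b : ℝ} (hab : a ≤ b) :
    (b - a) * f b ≤ ∫ s in a..b, f s := by
  calc (b - a) * f b = ∫ _ in a..b, f b := by rw [intervalIntegral.integral_const, smul_eq_mul]
    _ ≤ ∫ s in a..b, f s :=
        intervalIntegral.integral_mono_on hab intervalIntegrable_const hf.intervalIntegrable
          fun _ hs => hf hs.2

theorem integral_le_sum_left (hf : Antitone f) {x : ℕ → ℝ} (hx : Monotone x) (k : ℕ) :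
    ∫ s in x 0..x k, f s ≤ ∑ i ∈ range k, (x (i + 1) - x i) * f (x i) := by
  rw [← intervalIntegral.sum_integral_adjacent_intervals fun _ _ => hf.intervalIntegrable]
  exact sum_le_sum fun i _ => hf.integral_le_sub_mul_left (hx i.le_succ)

theorem sum_right_le_integral (hf : Antitone f) {x : ℕ → ℝ} (hx : Monotone x) (k : ℕ) :
    ∑ i ∈ range k, (x (i + 1) - x i) * f (x (i + 1)) ≤ ∫ s in x 0..x k, f s := by
  rw [← intervalIntegral.sum_integral_adjacent_intervals fun _ _ => hf.intervalIntegrable]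
  exact sum_le_sum fun i _ => hf.sub_mul_right_le_integral (hx i.le_succ)

end Antitone

noncomputable def equipartition (u v : ℝ) (k i : ℕ) : ℝ := u + i * (v - u) / k

section Equipartition

variable {u v : ℝ} {k : ℕ}

@[simp]
theorem equipartition_zero : equipartition u v k 0 = u := by
  simp [equipartition]

theorem equipartition_self (hk : k ≠ 0) : equipartition u v k k = v := by
  rw [equipartition, mul_div_cancel_left₀ _ (Nat.cast_ne_zero.2 hk : (k : ℝ) ≠ 0)]
  ring

theorem equipartition_succ_sub (i : ℕ) :
    equipartition u v k (i + 1) - equipartition u v k i = (v - u) / k := by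
  simp only [equipartition]
  push_cast
  ring

theorem monotone_equipartition (huv : u ≤ v) : Monotone (equipartition u v k) :=
  monotone_nat_of_le_succ fun i => by
    have := equipartition_succ_sub (u := u) (v := v) (k := k) i
    have : 0 ≤ (v - u) / k := div_nonneg (sub_nonneg.2 huv) k.cast_nonneg
    linarith

theorem equipartition_lt_succ (huv : u < v) (hk : k ≠ 0) (i : ℕ) :
    equipartition u v k i < equipartition u v k (i + 1) := by
  have := equipartition_succ_sub (u := u) (v := v) (k := k) i
  have : 0 < (v - u) / k := div_pos (sub_pos.2 huv) (Nat.cast_pos.2 (Nat.pos_of_ne_zero hk))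
  linarith

end Equipartition

/-- The error term is the gap between the left and right Riemann sums of `f`, which
telescopes. -/
theorem Antitone.abs_sum_sub_integral_lt {f : ℝ → ℝ} (hf : Antitone f) {u v : ℝ}
    (huv : u ≤ v) {k : ℕ} (hk : k ≠ 0) {δ : ℝ} {a : ℕ → ℝ}
    (hlow : ∀ i < k, (equipartition u v k (i + 1) - equipartition u v k i) *
      (f (equipartition u v k (i + 1)) - δ) < a i)
    (hup : ∀ i < k, a i < (equipartition u v k (i + 1) - equipartition u v k i) *
      (f (equipartition u v k i) + δ)) :
    |∑ i ∈ range k, a i - ∫ s in u..v, f s| < (v - u) * (f u - f v) / k + (v - u) * δ := by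
  set x := equipartition u v k
  have hmono : Monotone x := monotone_equipartition huv
  have hx0 : x 0 = u := equipartition_zero
  have hxk : x k = v := equipartition_self hk
  have hne : (range k).Nonempty := nonempty_range_iff.2 hk
  have hkδ : ∑ _i ∈ range k, (v - u) / k * δ = (v - u) * δ := by
    rw [sum_const, card_range, nsmul_eq_mul]
    field_simp
  have hleft := hf.integral_le_sum_left hmono k
  have hright := hf.sum_right_le_integral hmono k
  simp only [x, equipartition_succ_sub, hx0, hxk] at hlow hup hleft hright
  have htele : ∑ i ∈ range k, (v - u) / k * f (x i) - ∑ i ∈ range k, (v - u) / k * f (x (i + 1))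
      = (v - u) * (f u - f v) / k := by
    rw [← sum_sub_distrib, sum_range_sub' (fun i => (v - u) / k * f (x i)), hx0, hxk]
    ring
  have hsum_lt : ∑ i ∈ range k, a i < ∑ i ∈ range k, (v - u) / k * f (x i) + (v - u) * δ := by
    rw [← hkδ, ← sum_add_distrib]
    exact sum_lt_sum_of_nonempty hne fun i hi => by rw [← mul_add]; exact hup i (mem_range.1 hi)
  have hsum_gt : ∑ i ∈ range k, (v - u) / k * f (x (i + 1)) - (v - u) * δ
      < ∑ i ∈ range k, a i := by
    rw [← hkδ, ← sum_sub_distrib]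
    exact sum_lt_sum_of_nonempty hne fun i hi => by rw [← mul_sub]; exact hlow i (mem_range.1 hi)
  rw [abs_sub_lt_iff]
  constructor <;> linarith

section Measure

variable {α β ι : Type*} [MeasurableSpace α] {μ : Measure α} {l : Filter β}

theorem tendsto_measure_union_zero {A B : β → Set α}
    (hA : Tendsto (fun b => μ (A b)) l (𝓝 0)) (hB : Tendsto (fun b => μ (B b)) l (𝓝 0)) :
    Tendsto (fun b => μ (A b ∪ B b)) l (𝓝 0) := by
  have hsum : Tendsto (fun b => μ (A b) + μ (B b)) l (𝓝 0) := by simpa using hA.add hB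
  exact tendsto_of_tendsto_of_tendsto_of_le_of_le tendsto_const_nhds hsum (fun _ => zero_le)
    fun _ => measure_union_le _ _

theorem tendsto_measure_zero_of_subset_biUnion {s : β → Set α} {A : ι → β → Set α}
    (I : Finset ι) (hsub : ∀ b, s b ⊆ ⋃ i ∈ I, A i b)
    (hA : ∀ i ∈ I, Tendsto (fun b => μ (A i b)) l (𝓝 0)) :
    Tendsto (fun b => μ (s b)) l (𝓝 0) := by
  have hsum : Tendsto (fun b => ∑ i ∈ I, μ (A i b)) l (𝓝 0) := by
    simpa using tendsto_finsetSum I hA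
  exact tendsto_of_tendsto_of_tendsto_of_le_of_le tendsto_const_nhds hsum (fun _ => zero_le)
    fun b => (measure_mono (hsub b)).trans (measure_biUnion_finset_le I _)

end Measure

theorem riemann_sum_convergence_in_probability_general
    {Ω : Type*} [MeasurableSpace Ω] (μ : Measure Ω)
    (S : ℝ → ℝ → ℝ → Ω → ℝ)
    (f : ℝ → ℝ) (hfmono : Antitone f)
    -- additivity over equal partitions
    (hadd : ∀ t : ℝ, ∀ u v : ℝ, ∀ k : ℕ, 1 ≤ k → ∀ ω,
      S t u v ω = ∑ i ∈ Finset.range k,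
        S t (u + i * (v - u) / k) (u + (i + 1) * (v - u) / k) ω)
    -- one-sided upper estimate
    (hup : ∀ u v : ℝ, u < v → ∀ ε : ℝ, 0 < ε →
      Tendsto (fun t => μ {ω | (v - u) * (f u + ε) ≤ S t u v ω / t})
        atTop (nhds 0))
    -- one-sided lower estimate
    (hlow : ∀ u v : ℝ, u < v → ∀ ε : ℝ, 0 < ε →
      Tendsto (fun t => μ {ω | S t u v ω / t ≤ (v - u) * (f v - ε)})
        atTop (nhds 0)) :
    ∀ u v : ℝ, u < v → ∀ ε : ℝ, 0 < ε →
      Tendsto (fun t => μ {ω | ε ≤ |S t u v ω / t - ∫ s in u..v, f s|})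
        atTop (nhds 0) := by
  intro u v huv ε hε
  obtain ⟨k, hkε, hk⟩ : ∃ k : ℕ, (v - u) * (f u - f v) / k < ε / 2 ∧ k ≠ 0 :=
    (((tendsto_const_div_atTop_nhds_zero_nat _).eventually (gt_mem_nhds (half_pos hε))).and
      (eventually_ne_atTop 0)).exists
  set δ := ε / (2 * (v - u))
  have hδ : 0 < δ := div_pos hε (by linarith)
  have hδε : (v - u) * δ = ε / 2 := by
    simp only [δ]
    field_simp [(sub_pos.2 huv).ne']
  set x := equipartition u v k
  refine tendsto_measure_zero_of_subset_biUnion (range k)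
    (A := fun i t => {ω | (x (i + 1) - x i) * (f (x i) + δ) ≤ S t (x i) (x (i + 1)) ω / t} ∪
      {ω | S t (x i) (x (i + 1)) ω / t ≤ (x (i + 1) - x i) * (f (x (i + 1)) - δ)})
    (fun t ω (hω : ε ≤ _) => ?_) fun i _ => tendsto_measure_union_zero
      (hup _ _ (equipartition_lt_succ huv hk i) δ hδ)
      (hlow _ _ (equipartition_lt_succ huv hk i) δ hδ)
  by_contra hgood
  simp only [Set.mem_iUnion, Set.mem_union, Set.mem_ofPred_eq, mem_range, not_exists,
    not_or, not_le] at hgood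
  have hsplit : S t u v ω / t = ∑ i ∈ range k, S t (x i) (x (i + 1)) ω / t := by
    rw [hadd t u v k (Nat.one_le_iff_ne_zero.2 hk) ω, sum_div]
    simp [x, equipartition]
  have := hfmono.abs_sum_sub_integral_lt huv.le hk (fun i hi => (hgood i hi).2)
    fun i hi => (hgood i hi).1
  rw [← hsplit] at this
  linarith

/-- Abstract Riemann-sum argument: if the normalized counts `S t u v / t` satisfy
the two one-sided tail estimates with the nonincreasing profile `f` on every
subinterval, and `S` is additive over partitions, then `S t u v / t` converges in
probability to `∫_u^v f`. -/
theorem riemann_sum_convergence_in_probability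
    {Ω : Type*} [MeasurableSpace Ω] (μ : Measure Ω) [IsProbabilityMeasure μ]
    (S : ℝ → ℝ → ℝ → Ω → ℝ)
    (hmeas : ∀ t u v, Measurable (S t u v))
    (f : ℝ → ℝ) (hf01 : ∀ u, f u ∈ Set.Icc (0:ℝ) 1) (hfmono : Antitone f)
    (hfint : ∀ u v : ℝ, IntervalIntegrable f MeasureTheory.volume u v)
    -- additivity over equal partitions
    (hadd : ∀ t : ℝ, ∀ u v : ℝ, ∀ k : ℕ, 1 ≤ k → ∀ ω,
      S t u v ω = ∑ i ∈ Finset.range k,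
        S t (u + i * (v - u) / k) (u + (i + 1) * (v - u) / k) ω)
    -- one-sided upper estimate
    (hup : ∀ u v : ℝ, u < v → ∀ ε : ℝ, 0 < ε →
      Tendsto (fun t => μ {ω | (v - u) * (f u + ε) ≤ S t u v ω / t})
        atTop (nhds 0))
    -- one-sided lower estimate
    (hlow : ∀ u v : ℝ, u < v → ∀ ε : ℝ, 0 < ε →
      Tendsto (fun t => μ {ω | S t u v ω / t ≤ (v - u) * (f v - ε)})
        atTop (nhds 0)) :
    ∀ u v : ℝ, u < v → ∀ ε : ℝ, 0 < ε →
      Tendsto (fun t => μ {ω | ε ≤ |S t u v ω / t - ∫ s in u..v, f s|})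
        atTop (nhds 0) :=
  riemann_sum_convergence_in_probability_general μ S f hfmono hadd hup hlow
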